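/- Every probability measure $Q$ of the form $Q(A) = \int_{\Omega^-}\int_{\Omega^+} \left[\chi_A(\omega_1) \frac{\xi^+(\omega_2)}{\xi^-(\omega_1)+\xi^+(\omega_2)} + \chi_A(\omega_2) \frac{\xi^-(\omega_1)}{\xi^-(\omega_1)+\xi^+(\omega_2)}\right] \alpha(\omega_1, \omega_2) \, d\mu(\omega_1, \omega_2)$, where $\alpha \ge 0$ satisfies $\mu(\alpha > 0) = P(\Omega^+)P(\Omega^-)$, $\int \alpha \frac{\xi^-\xi^+}{\xi^-+\xi^+} d\mu < \infty$, and $\int \alpha \, d\mu = 1$, is equivalent to $P$ and satisfies $E^Q \xi = 0$. -/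

import Mathlib

open MeasureTheory Filter
open scoped ENNReal NNReal

noncomputable def xiPos {Ω : Type*} (ξ : Ω → ℝ) (ω : Ω) : ℝ := max (ξ ω) 0

noncomputable def xiNeg {Ω : Type*} (ξ : Ω → ℝ) (ω : Ω) : ℝ := max (-ξ ω) 0

/-- The product `μ = P⁻ × P⁺` of the restrictions of `P` to `Ω⁻ = {ξ ≤ 0}` and
`Ω⁺ = {ξ > 0}`. -/
noncomputable def prodMeas {Ω : Type*} [MeasurableSpace Ω] (P : Measure Ω) (ξ : Ω → ℝ) :
    Measure (Ω × Ω) :=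
  (P.restrict {ω | ξ ω ≤ 0}).prod (P.restrict {ω | 0 < ξ ω})

/-- The kernel `χ_S(ω₁) ξ⁺(ω₂)/(ξ⁻(ω₁)+ξ⁺(ω₂)) + χ_S(ω₂) ξ⁻(ω₁)/(ξ⁻(ω₁)+ξ⁺(ω₂))`. -/
noncomputable def kern {Ω : Type*} (ξ : Ω → ℝ) (S : Set Ω) (p : Ω × Ω) : ℝ :=
  Set.indicator S (fun _ => (1 : ℝ)) p.1 * (xiPos ξ p.2 / (xiNeg ξ p.1 + xiPos ξ p.2)) +
  Set.indicator S (fun _ => (1 : ℝ)) p.2 * (xiNeg ξ p.1 / (xiNeg ξ p.1 + xiPos ξ p.2))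

/-- The admissibility conditions on the weight `α`. -/
def GoodAlpha {Ω : Type*} [MeasurableSpace Ω] (P : Measure Ω) (ξ : Ω → ℝ)
    (α : Ω × Ω → ℝ) : Prop :=
  Measurable α ∧ (∀ p, 0 ≤ α p) ∧
  prodMeas P ξ {p | 0 < α p} = P {ω | 0 < ξ ω} * P {ω | ξ ω ≤ 0} ∧
  Integrable (fun p => α p * (xiNeg ξ p.1 * xiPos ξ p.2 / (xiNeg ξ p.1 + xiPos ξ p.2)))
    (prodMeas P ξ) ∧
  ∫ p, α p ∂(prodMeas P ξ) = 1

/-! `Q` splits into two pushforwards of weighted copies of `μ = P⁻ × P⁺`: each pair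
`(ω₁, ω₂)` sends the mass `α ξ⁺(ω₂)/(ξ⁻(ω₁)+ξ⁺(ω₂))` to `ω₁ ∈ Ω⁻` and `α ξ⁻(ω₁)/(ξ⁻(ω₁)+ξ⁺(ω₂))`
to `ω₂ ∈ Ω⁺`. These pieces are dominated by the marginals of `μ`, hence by `P`. Since `α > 0`
`μ`-a.e., the first piece charges every `P`-nonnull subset of `Ω⁻`, and the second, fed by
the pairs with `ξ(ω₁) < 0`, every `P`-nonnull subset of `Ω⁺`. Finally the pair contributes
`-α ξ⁻ξ⁺/(ξ⁻+ξ⁺)` to `E^Q ξ` through `ω₁` and `+α ξ⁻ξ⁺/(ξ⁻+ξ⁺)` through `ω₂`, so `E^Q ξ = 0`. -/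

open scoped ENNReal

section MapWithDensity

variable {X Y : Type*} [MeasurableSpace X] [MeasurableSpace Y] {μ : Measure X} {f : X → ℝ}
  {g : X → Y}

lemma map_withDensity_ofReal_apply (hf : Integrable f μ) (hf₀ : 0 ≤ f) (hg : Measurable g)
    {S : Set Y} (hS : MeasurableSet S) :
    (μ.withDensity fun x => ENNReal.ofReal (f x)).map g S =
      ENNReal.ofReal (∫ x in g ⁻¹' S, f x ∂μ) := by
  rw [Measure.map_apply hg hS, withDensity_apply _ (hg hS),
    ofReal_integral_eq_lintegral_ofReal hf.integrableOn (ae_of_all _ hf₀)]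

lemma integrable_map_withDensity_ofReal_iff (hf : Measurable f) (hf₀ : 0 ≤ f)
    (hg : Measurable g) {h : Y → ℝ} (hh : Measurable h) :
    Integrable h ((μ.withDensity fun x => ENNReal.ofReal (f x)).map g) ↔
      Integrable (fun x => f x * h (g x)) μ := by
  rw [integrable_map_measure hh.aestronglyMeasurable hg.aemeasurable,
    integrable_withDensity_iff_integrable_smul' hf.ennreal_ofReal
      (ae_of_all _ fun _ => ENNReal.ofReal_lt_top)]
  simp only [ENNReal.toReal_ofReal (hf₀ _), smul_eq_mul, Function.comp_apply]

lemma integral_map_withDensity_ofReal (hf : Measurable f) (hf₀ : 0 ≤ f) (hg : Measurable g)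
    {h : Y → ℝ} (hh : Measurable h) :
    ∫ y, h y ∂(μ.withDensity fun x => ENNReal.ofReal (f x)).map g = ∫ x, f x * h (g x) ∂μ := by
  rw [integral_map hg.aemeasurable hh.aestronglyMeasurable,
    integral_withDensity_eq_integral_toReal_smul hf.ennreal_ofReal
      (ae_of_all _ fun _ => ENNReal.ofReal_lt_top)]
  simp only [ENNReal.toReal_ofReal (hf₀ _), smul_eq_mul]

lemma restrict_absolutelyContinuous_withDensity {T : Set X} (hT : MeasurableSet T)
    {d : X → ℝ≥0∞} (hd : Measurable d) (hd₀ : ∀ᵐ x ∂μ.restrict T, d x ≠ 0) :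
    μ.restrict T ≪ μ.withDensity d :=
  (withDensity_absolutelyContinuous' hd.aemeasurable hd₀).trans <| by
    rw [← restrict_withDensity hT]
    exact Measure.absolutelyContinuous_restrict

end MapWithDensity

section Weights

variable {Ω : Type*} {ξ : Ω → ℝ} {p : Ω × Ω}

noncomputable def fstWeight (ξ : Ω → ℝ) (p : Ω × Ω) : ℝ :=
  xiPos ξ p.2 / (xiNeg ξ p.1 + xiPos ξ p.2)

noncomputable def sndWeight (ξ : Ω → ℝ) (p : Ω × Ω) : ℝ :=
  xiNeg ξ p.1 / (xiNeg ξ p.1 + xiPos ξ p.2)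

lemma xiPos_nonneg (ξ : Ω → ℝ) (ω : Ω) : 0 ≤ xiPos ξ ω := le_max_right _ _

lemma xiNeg_nonneg (ξ : Ω → ℝ) (ω : Ω) : 0 ≤ xiNeg ξ ω := le_max_right _ _

lemma fstWeight_nonneg : 0 ≤ fstWeight ξ p :=
  div_nonneg (xiPos_nonneg _ _) (add_nonneg (xiNeg_nonneg _ _) (xiPos_nonneg _ _))

lemma sndWeight_nonneg : 0 ≤ sndWeight ξ p :=
  div_nonneg (xiNeg_nonneg _ _) (add_nonneg (xiNeg_nonneg _ _) (xiPos_nonneg _ _))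

lemma fstWeight_le_one : fstWeight ξ p ≤ 1 :=
  div_le_one_of_le₀ (le_add_of_nonneg_left (xiNeg_nonneg _ _))
    (add_nonneg (xiNeg_nonneg _ _) (xiPos_nonneg _ _))

lemma sndWeight_le_one : sndWeight ξ p ≤ 1 :=
  div_le_one_of_le₀ (le_add_of_nonneg_right (xiPos_nonneg _ _))
    (add_nonneg (xiNeg_nonneg _ _) (xiPos_nonneg _ _))

lemma fstWeight_pos (h : 0 < ξ p.2) : 0 < fstWeight ξ p := by
  have hpos : 0 < xiPos ξ p.2 := lt_max_of_lt_left h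
  exact div_pos hpos (add_pos_of_nonneg_of_pos (xiNeg_nonneg _ _) hpos)

lemma sndWeight_pos (h : ξ p.1 < 0) : 0 < sndWeight ξ p := by
  have hneg : 0 < xiNeg ξ p.1 := lt_max_of_lt_left (neg_pos.2 h)
  exact div_pos hneg (add_pos_of_pos_of_nonneg hneg (xiPos_nonneg _ _))

lemma fstWeight_mul_apply_fst (h : ξ p.1 ≤ 0) :
    fstWeight ξ p * ξ p.1 = -(xiNeg ξ p.1 * xiPos ξ p.2 / (xiNeg ξ p.1 + xiPos ξ p.2)) := by
  have hneg : xiNeg ξ p.1 = -ξ p.1 := max_eq_left (neg_nonneg.2 h)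
  rw [fstWeight, hneg]
  ring

lemma sndWeight_mul_apply_snd (h : 0 ≤ ξ p.2) :
    sndWeight ξ p * ξ p.2 = xiNeg ξ p.1 * xiPos ξ p.2 / (xiNeg ξ p.1 + xiPos ξ p.2) := by
  have hpos : xiPos ξ p.2 = ξ p.2 := max_eq_left h
  rw [sndWeight, hpos]
  ring

lemma mul_kern_eq_indicator (α : Ω × Ω → ℝ) (S : Set Ω) :
    α p * kern ξ S p = (Prod.fst ⁻¹' S).indicator (fun q => α q * fstWeight ξ q) p +
      (Prod.snd ⁻¹' S).indicator (fun q => α q * sndWeight ξ q) p := by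
  by_cases h₁ : p.1 ∈ S <;> by_cases h₂ : p.2 ∈ S <;>
    simp [kern, fstWeight, sndWeight, h₁, h₂, mul_add]

variable [MeasurableSpace Ω]

lemma measurable_fstWeight (hξ : Measurable ξ) : Measurable (fstWeight ξ) := by
  unfold fstWeight xiPos xiNeg
  fun_prop

lemma measurable_sndWeight (hξ : Measurable ξ) : Measurable (sndWeight ξ) := by
  unfold sndWeight xiPos xiNeg
  fun_prop

end Weights

section ProdMeas

variable {Ω : Type*} [MeasurableSpace Ω] {P : Measure Ω} {ξ : Ω → ℝ}

instance [IsFiniteMeasure P] : IsFiniteMeasure (prodMeas P ξ) := by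
  unfold prodMeas
  infer_instance

lemma ae_prodMeas [SFinite P] (hξ : Measurable ξ) : ∀ᵐ p ∂prodMeas P ξ, ξ p.1 ≤ 0 ∧ 0 < ξ p.2 := by
  rw [prodMeas, Measure.prod_restrict]
  exact ae_restrict_mem ((measurableSet_le hξ measurable_const).prod
    (measurableSet_lt measurable_const hξ))

lemma prodMeas_univ [SFinite P] : prodMeas P ξ Set.univ = P {ω | ξ ω ≤ 0} * P {ω | 0 < ξ ω} := by
  rw [prodMeas, ← Set.univ_prod_univ, Measure.prod_prod, Measure.restrict_apply_univ,
    Measure.restrict_apply_univ]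

lemma map_fst_prodMeas [SFinite P] :
    (prodMeas P ξ).map Prod.fst = P {ω | 0 < ξ ω} • P.restrict {ω | ξ ω ≤ 0} := by
  rw [prodMeas, Measure.map_fst_prod, Measure.restrict_apply_univ]

lemma map_snd_restrict_prodMeas [SFinite P] (hξ : Measurable ξ) :
    ((prodMeas P ξ).restrict {p | ξ p.1 < 0}).map Prod.snd =
      P {ω | ξ ω < 0} • P.restrict {ω | 0 < ξ ω} := by
  have hfst : {p : Ω × Ω | ξ p.1 < 0} = {ω | ξ ω < 0} ×ˢ Set.univ := by ext; simp
  have hneg : {ω | ξ ω < 0} ∩ {ω | ξ ω ≤ 0} = {ω | ξ ω < 0} := by ext; simp +contextual [le_of_lt]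
  rw [prodMeas, hfst, ← Measure.restrict_prod_eq_prod_univ, Measure.map_snd_prod,
    Measure.restrict_apply_univ, Measure.restrict_apply (measurableSet_lt hξ measurable_const),
    hneg]

end ProdMeas

section Parts

variable {Ω : Type*} [MeasurableSpace Ω] {P : Measure Ω} {ξ : Ω → ℝ} {α : Ω × Ω → ℝ}

namespace GoodAlpha

variable (hα : GoodAlpha P ξ α)
include hα

lemma integrable : Integrable α (prodMeas P ξ) :=
  Integrable.of_integral_ne_zero (by rw [hα.2.2.2.2]; exact one_ne_zero)

lemma ae_pos [IsFiniteMeasure P] : ∀ᵐ p ∂prodMeas P ξ, 0 < α p := by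
  have hms : MeasurableSet {p | 0 < α p} := measurableSet_lt measurable_const hα.1
  show prodMeas P ξ {p | 0 < α p}ᶜ = 0
  rw [measure_compl hms (measure_ne_top _ _), hα.2.2.1, prodMeas_univ, mul_comm, tsub_self]

lemma mul_fstWeight_nonneg : 0 ≤ fun p => α p * fstWeight ξ p :=
  fun p => mul_nonneg (hα.2.1 p) fstWeight_nonneg

lemma mul_sndWeight_nonneg : 0 ≤ fun p => α p * sndWeight ξ p :=
  fun p => mul_nonneg (hα.2.1 p) sndWeight_nonneg

lemma measurable_mul_fstWeight (hξ : Measurable ξ) : Measurable fun p => α p * fstWeight ξ p :=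
  hα.1.mul (measurable_fstWeight hξ)

lemma measurable_mul_sndWeight (hξ : Measurable ξ) : Measurable fun p => α p * sndWeight ξ p :=
  hα.1.mul (measurable_sndWeight hξ)

lemma integrable_mul_fstWeight (hξ : Measurable ξ) :
    Integrable (fun p => α p * fstWeight ξ p) (prodMeas P ξ) :=
  hα.integrable.mul_bdd (measurable_fstWeight hξ).aestronglyMeasurable <| ae_of_all _ fun _ => by
    rw [Real.norm_of_nonneg fstWeight_nonneg]
    exact fstWeight_le_one

lemma integrable_mul_sndWeight (hξ : Measurable ξ) :
    Integrable (fun p => α p * sndWeight ξ p) (prodMeas P ξ) :=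
  hα.integrable.mul_bdd (measurable_sndWeight hξ).aestronglyMeasurable <| ae_of_all _ fun _ => by
    rw [Real.norm_of_nonneg sndWeight_nonneg]
    exact sndWeight_le_one

end GoodAlpha

noncomputable def fstPart (P : Measure Ω) (ξ : Ω → ℝ) (α : Ω × Ω → ℝ) : Measure Ω :=
  ((prodMeas P ξ).withDensity fun p => ENNReal.ofReal (α p * fstWeight ξ p)).map Prod.fst

noncomputable def sndPart (P : Measure Ω) (ξ : Ω → ℝ) (α : Ω × Ω → ℝ) : Measure Ω :=
  ((prodMeas P ξ).withDensity fun p => ENNReal.ofReal (α p * sndWeight ξ p)).map Prod.snd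

lemma eq_fstPart_add_sndPart {Q : Measure Ω} [IsFiniteMeasure Q] (hξ : Measurable ξ)
    (hα : GoodAlpha P ξ α)
    (hrep : ∀ S, MeasurableSet S → (Q S).toReal = ∫ p, α p * kern ξ S p ∂prodMeas P ξ) :
    Q = fstPart P ξ α + sndPart P ξ α := by
  ext S hS
  have hfst := hα.integrable_mul_fstWeight hξ
  have hsnd := hα.integrable_mul_sndWeight hξ
  rw [← ENNReal.ofReal_toReal (measure_ne_top Q S), hrep S hS, Measure.add_apply, fstPart,
    sndPart, map_withDensity_ofReal_apply hfst hα.mul_fstWeight_nonneg measurable_fst hS,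
    map_withDensity_ofReal_apply hsnd hα.mul_sndWeight_nonneg measurable_snd hS,
    ← ENNReal.ofReal_add (integral_nonneg fun p => hα.mul_fstWeight_nonneg p)
      (integral_nonneg fun p => hα.mul_sndWeight_nonneg p),
    ← integral_indicator (measurable_fst hS), ← integral_indicator (measurable_snd hS),
    ← integral_add (hfst.indicator (measurable_fst hS)) (hsnd.indicator (measurable_snd hS))]
  simp_rw [mul_kern_eq_indicator]

lemma fstPart_absolutelyContinuous [SFinite P] : fstPart P ξ α ≪ P :=
  ((withDensity_absolutelyContinuous _ _).map measurable_fst).trans <| by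
    rw [map_fst_prodMeas]
    exact Measure.smul_absolutelyContinuous.trans Measure.absolutelyContinuous_restrict

lemma sndPart_absolutelyContinuous [SFinite P] : sndPart P ξ α ≪ P :=
  ((withDensity_absolutelyContinuous _ _).map measurable_snd).trans <| by
    rw [prodMeas, Measure.map_snd_prod]
    exact Measure.smul_absolutelyContinuous.trans Measure.absolutelyContinuous_restrict

lemma restrict_absolutelyContinuous_fstPart [IsFiniteMeasure P] (hξ : Measurable ξ)
    (hα : GoodAlpha P ξ α) (hP : 0 < P {ω | 0 < ξ ω}) :
    P.restrict {ω | ξ ω ≤ 0} ≪ fstPart P ξ α := by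
  refine (Measure.absolutelyContinuous_smul hP.ne').trans ?_
  rw [← map_fst_prodMeas]
  refine Measure.AbsolutelyContinuous.map (withDensity_absolutelyContinuous'
    (hα.measurable_mul_fstWeight hξ).ennreal_ofReal.aemeasurable ?_) measurable_fst
  filter_upwards [ae_prodMeas hξ, hα.ae_pos] with p hp hαp
  exact (ENNReal.ofReal_pos.2 (mul_pos hαp (fstWeight_pos hp.2))).ne'

-- The second weight vanishes where `ξ ω₁ = 0`, so only the part of `μ` over `{ξ < 0}` is used.
lemma restrict_absolutelyContinuous_sndPart [IsFiniteMeasure P] (hξ : Measurable ξ)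
    (hα : GoodAlpha P ξ α) (hP : 0 < P {ω | ξ ω < 0}) :
    P.restrict {ω | 0 < ξ ω} ≪ sndPart P ξ α := by
  have hneg : MeasurableSet {p : Ω × Ω | ξ p.1 < 0} :=
    measurableSet_lt (hξ.comp measurable_fst) measurable_const
  refine (Measure.absolutelyContinuous_smul hP.ne').trans ?_
  rw [← map_snd_restrict_prodMeas hξ]
  refine Measure.AbsolutelyContinuous.map (restrict_absolutelyContinuous_withDensity hneg
    (hα.measurable_mul_sndWeight hξ).ennreal_ofReal ?_) measurable_snd
  filter_upwards [ae_restrict_mem hneg, ae_restrict_of_ae hα.ae_pos] with p hp hαp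
  exact (ENNReal.ofReal_pos.2 (mul_pos hαp (sndWeight_pos hp))).ne'

lemma absolutelyContinuous_fstPart_add_sndPart [IsFiniteMeasure P] (hξ : Measurable ξ)
    (hα : GoodAlpha P ξ α) (hpos : 0 < P {ω | 0 < ξ ω}) (hneg : 0 < P {ω | ξ ω < 0}) :
    P ≪ fstPart P ξ α + sndPart P ξ α := by
  have hcompl : {ω | ξ ω ≤ 0}ᶜ = {ω | 0 < ξ ω} := by ext; simp
  conv_lhs =>
    rw [← Measure.restrict_add_restrict_compl (μ := P) (measurableSet_le hξ measurable_const), hcompl]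
  exact ((restrict_absolutelyContinuous_fstPart hξ hα hpos).add_right _).add_left
    ((restrict_absolutelyContinuous_sndPart hξ hα hneg).add_right' _)

lemma integrable_fstPart [SFinite P] (hξ : Measurable ξ) (hα : GoodAlpha P ξ α) :
    Integrable ξ (fstPart P ξ α) := by
  rw [fstPart, integrable_map_withDensity_ofReal_iff (hα.measurable_mul_fstWeight hξ)
    hα.mul_fstWeight_nonneg measurable_fst hξ]
  refine hα.2.2.2.1.neg.congr ?_
  filter_upwards [ae_prodMeas hξ] with p hp
  rw [Pi.neg_apply, mul_assoc, fstWeight_mul_apply_fst hp.1, mul_neg]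

lemma integrable_sndPart [SFinite P] (hξ : Measurable ξ) (hα : GoodAlpha P ξ α) :
    Integrable ξ (sndPart P ξ α) := by
  rw [sndPart, integrable_map_withDensity_ofReal_iff (hα.measurable_mul_sndWeight hξ)
    hα.mul_sndWeight_nonneg measurable_snd hξ]
  refine hα.2.2.2.1.congr ?_
  filter_upwards [ae_prodMeas hξ] with p hp
  rw [mul_assoc, sndWeight_mul_apply_snd hp.2.le]

lemma integral_fstPart_eq_neg_integral_sndPart [SFinite P] (hξ : Measurable ξ) (hα : GoodAlpha P ξ α) :
    ∫ ω, ξ ω ∂fstPart P ξ α = -∫ ω, ξ ω ∂sndPart P ξ α := by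
  rw [fstPart, sndPart, integral_map_withDensity_ofReal (hα.measurable_mul_fstWeight hξ)
      hα.mul_fstWeight_nonneg measurable_fst hξ,
    integral_map_withDensity_ofReal (hα.measurable_mul_sndWeight hξ)
      hα.mul_sndWeight_nonneg measurable_snd hξ, ← integral_neg]
  refine integral_congr_ae ?_
  filter_upwards [ae_prodMeas hξ] with p hp
  rw [mul_assoc, mul_assoc, fstWeight_mul_apply_fst hp.1, sndWeight_mul_apply_snd hp.2.le, mul_neg]

end Parts

theorem stmt8_general {Ω : Type*} [MeasurableSpace Ω] (P Q : Measure Ω)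
    [IsProbabilityMeasure P] [IsProbabilityMeasure Q]
    (ξ : Ω → ℝ) (hmeas : Measurable ξ)
    (h1 : 0 < P {ω | 0 < ξ ω}) (h3 : 0 < P {ω | ξ ω < 0})
    (α : Ω × Ω → ℝ) (hα : GoodAlpha P ξ α)
    (hrep : ∀ S : Set Ω, MeasurableSet S →
      (Q S).toReal = ∫ p, α p * kern ξ S p ∂(prodMeas P ξ)) :
    Q ≪ P ∧ P ≪ Q ∧ Integrable ξ Q ∧ ∫ ω, ξ ω ∂Q = 0 := by
  have hfst := integrable_fstPart hmeas hα
  have hsnd := integrable_sndPart hmeas hα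
  rw [eq_fstPart_add_sndPart hmeas hα hrep]
  refine ⟨fstPart_absolutelyContinuous.add_left sndPart_absolutelyContinuous,
    absolutelyContinuous_fstPart_add_sndPart hmeas hα h1 h3,
    integrable_add_measure.2 ⟨hfst, hsnd⟩, ?_⟩
  rw [integral_add_measure hfst hsnd, integral_fstPart_eq_neg_integral_sndPart hmeas hα,
    neg_add_cancel]

theorem stmt8 {Ω : Type*} [MeasurableSpace Ω] (P Q : Measure Ω)
    [IsProbabilityMeasure P] [IsProbabilityMeasure Q]
    (ξ : Ω → ℝ) (hmeas : Measurable ξ)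
    (h1 : 0 < P {ω | 0 < ξ ω}) (h2 : P {ω | 0 < ξ ω} < 1) (h3 : 0 < P {ω | ξ ω < 0})
    (α : Ω × Ω → ℝ) (hα : GoodAlpha P ξ α)
    (hrep : ∀ S : Set Ω, MeasurableSet S →
      (Q S).toReal = ∫ p, α p * kern ξ S p ∂(prodMeas P ξ)) :
    Q ≪ P ∧ P ≪ Q ∧ Integrable ξ Q ∧ ∫ ω, ξ ω ∂Q = 0 :=
  stmt8_general P Q ξ hmeas h1 h3 α hα hrep
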